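/- arXiv:2303.09478 — 6 statements merged into one kernel-verified Lean document; each statement's English description precedes it below -/
import Mathlib

section
/- Under top-1 (single-genome) selection in Numeric Fitness World with n > 1 orders of meta-parameters and i.i.d. Gaussian mutation noise B with variance β > 0, the expected number of children of the distinguished member after n+1 generations is unchanged by shifting that member's highest-order meta-parameter: E[|F(P̄, B, n+1)|] = E[|F(P, B, n+1)|]. -/
open Finset

/-- A genome with `n` orders of meta-parameters: a vector `(x^0, …, x^n) ∈ ℝ^(n+1)`. -/
abbrev Genome (n : ℕ) := Fin (n + 1) → ℝ

/-- The fitness of a genome is its 0th coordinate. -/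
def fitness {n : ℕ} (g : Genome n) : ℝ := g 0

/-- Numeric Fitness World mutation with noise vector `noise`:
`x^i ← x^i + x^(i+1) + noise^i` for `i < n` and `x^n ← x^n + noise^n`. -/
def mutate {n : ℕ} (g : Genome n) (noise : Fin (n + 1) → ℝ) : Genome n :=
  fun i => if h : (i : ℕ) < n then g i + g ⟨(i : ℕ) + 1, by omega⟩ + noise i
           else g i + noise i

/-- Sorting key for selection: fitter members come first; ties are broken by the
fixed ordering of member indices. -/
def key {n m : ℕ} (pop : Fin m → Genome n) (j : Fin m) : Lex (ℝ × ℕ) :=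
  toLex (-(fitness (pop j)), (j : ℕ))

/-- The member of rank `r` (rank `0` is the fittest, ties broken by index). -/
noncomputable def rankMember {n m : ℕ} (pop : Fin m → Genome n) (r : Fin m) : Fin m :=
  Tuple.sort (key pop) r

/-- The set of members selected by top-`k` selection. -/
noncomputable def selectedSet {n m : ℕ} (k : ℕ) (pop : Fin m → Genome n) : Finset (Fin m) :=
  (Finset.univ.filter fun r : Fin m => (r : ℕ) < k).image (rankMember pop)

/-- Under top-`k` selection each of the `k` fittest members is copied `m / k` times:
slot `j` of the next generation descends from the selected member of rank `j % k`. -/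
noncomputable def parentIdx {n m : ℕ} (k : ℕ) (hk : 0 < k) (hkm : k ≤ m)
    (pop : Fin m → Genome n) (j : Fin m) : Fin m :=
  rankMember pop ⟨(j : ℕ) % k, lt_of_lt_of_le (Nat.mod_lt _ hk) hkm⟩

/-- Population-based evolution with top-`k` selection from initial population `P`
under the noise realization `b` (indexed by generation, slot and coordinate):
at each generation the `k` fittest members are selected, each is copied `m / k` times,
and each copy is mutated with its own noise entries. -/
noncomputable def evolve {n m : ℕ} (k : ℕ) (hk : 0 < k) (hkm : k ≤ m)
    (b : ℕ → Fin m → Fin (n + 1) → ℝ) (P : Fin m → Genome n) : ℕ → Fin m → Genome n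
  | 0 => P
  | t + 1 => fun j =>
      mutate (evolve k hk hkm b P t (parentIdx k hk hkm (evolve k hk hkm b P t) j)) (b t j)

/-- `isChild k hk hkm b P x0 t j = true` iff member `j` of generation `t` descends from
the distinguished member `x0` of the initial population `P`. -/
noncomputable def isChild {n m : ℕ} (k : ℕ) (hk : 0 < k) (hkm : k ≤ m)
    (b : ℕ → Fin m → Fin (n + 1) → ℝ) (P : Fin m → Genome n) (x0 : Fin m) :
    ℕ → Fin m → Bool
  | 0 => fun j => decide (j = x0)
  | t + 1 => fun j => isChild k hk hkm b P x0 t (parentIdx k hk hkm (evolve k hk hkm b P t) j)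

/-- `F`: the multiset of fitnesses of the children of `x0` at generation `t`. -/
noncomputable def F {n m : ℕ} (k : ℕ) (hk : 0 < k) (hkm : k ≤ m)
    (b : ℕ → Fin m → Fin (n + 1) → ℝ) (P : Fin m → Genome n) (x0 : Fin m) (t : ℕ) :
    Multiset ℝ :=
  (Finset.univ.filter fun j => isChild k hk hkm b P x0 t j = true).val.map
    fun j => fitness (evolve k hk hkm b P t j)

/-- `Finv` (`F⁻¹`): the multiset of fitnesses of the non-children of `x0` at generation `t`. -/
noncomputable def Finv {n m : ℕ} (k : ℕ) (hk : 0 < k) (hkm : k ≤ m)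
    (b : ℕ → Fin m → Fin (n + 1) → ℝ) (P : Fin m → Genome n) (x0 : Fin m) (t : ℕ) :
    Multiset ℝ :=
  (Finset.univ.filter fun j => isChild k hk hkm b P x0 t j = false).val.map
    fun j => fitness (evolve k hk hkm b P t j)

/-- Under top-1 (single-genome) selection with `n > 1` orders of
meta-parameters and i.i.d. Gaussian mutation noise of variance `β > 0`, the expected
number of children of the distinguished member after `n + 1` generations is unchanged by
shifting that member's highest-order meta-parameter:
`E[|F(P̄, B, n+1)|] = E[|F(P, B, n+1)|]`. -/
theorem top_one_expected_children_eq
    {Ω : Type*} [MeasurableSpace Ω] (μ : MeasureTheory.Measure Ω)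
    [MeasureTheory.IsProbabilityMeasure μ]
    {n m : ℕ} (hn : 1 < n) (hm : 0 < m) (β : NNReal) (hβ : 0 < β)
    (B : ℕ → Fin m → Fin (n + 1) → Ω → ℝ)
    (hmeas : ∀ (t : ℕ) (j : Fin m) (i : Fin (n + 1)), Measurable (B t j i))
    (hindep : ProbabilityTheory.iIndepFun
      (fun (p : ℕ × Fin m × Fin (n + 1)) ω => B p.1 p.2.1 p.2.2 ω) μ)
    (hdist : ∀ (t : ℕ) (j : Fin m) (i : Fin (n + 1)),
      MeasureTheory.Measure.map (B t j i) μ = ProbabilityTheory.gaussianReal 0 β)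
    (P Pbar : Fin m → Genome n) (x0 : Fin m) (δ : ℝ) (hδ : 0 < δ)
    (hbar_last : Pbar x0 (Fin.last n) = P x0 (Fin.last n) + δ)
    (hbar_eq : ∀ i : Fin (n + 1), i ≠ Fin.last n → Pbar x0 i = P x0 i)
    (hbar_other : ∀ j : Fin m, j ≠ x0 → Pbar j = P j) :
    ∫ ω, (Multiset.card (F 1 Nat.one_pos hm (fun t j i => B t j i ω) Pbar x0 (n + 1)) : ℝ) ∂μ =
      ∫ ω, (Multiset.card (F 1 Nat.one_pos hm (fun t j i => B t j i ω) P x0 (n + 1)) : ℝ) ∂μ := by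
  have hfit : ∀ j, fitness (Pbar j) = fitness (P j) := by
    intro j
    by_cases hj : j = x0
    · subst hj
      unfold fitness
      exact hbar_eq 0 (by simp [Fin.ext_iff]; omega)
    · rw [hbar_other j hj]
  have hkey : key Pbar = key P := by
    funext j; unfold key; rw [hfit]
  have hrank : rankMember Pbar = rankMember P := by
    unfold rankMember; rw [hkey]
  have hchild : ∀ (b : ℕ → Fin m → Fin (n + 1) → ℝ) (t : ℕ) (j j' : Fin m),
      isChild 1 Nat.one_pos hm b Pbar x0 (t + 1) j
        = isChild 1 Nat.one_pos hm b P x0 (t + 1) j' := by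
    intro b t
    induction t with
    | zero =>
      intro j j'
      show isChild 1 Nat.one_pos hm b Pbar x0 0
            (parentIdx 1 Nat.one_pos hm (evolve 1 Nat.one_pos hm b Pbar 0) j)
          = isChild 1 Nat.one_pos hm b P x0 0
            (parentIdx 1 Nat.one_pos hm (evolve 1 Nat.one_pos hm b P 0) j')
      show decide _ = decide _
      have hpar : parentIdx 1 Nat.one_pos hm (evolve 1 Nat.one_pos hm b Pbar 0) j
          = parentIdx 1 Nat.one_pos hm (evolve 1 Nat.one_pos hm b P 0) j' := by
        show parentIdx 1 Nat.one_pos hm Pbar j = parentIdx 1 Nat.one_pos hm P j'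
        unfold parentIdx
        rw [hrank]
        congr 1
        simp [Fin.ext_iff, Nat.mod_one]
      rw [hpar]
    | succ t ih =>
      intro j j'
      show isChild 1 Nat.one_pos hm b Pbar x0 (t + 1) _
          = isChild 1 Nat.one_pos hm b P x0 (t + 1) _
      exact ih _ _
  have hcard : ∀ b : ℕ → Fin m → Fin (n + 1) → ℝ,
      Multiset.card (F 1 Nat.one_pos hm b Pbar x0 (n + 1))
        = Multiset.card (F 1 Nat.one_pos hm b P x0 (n + 1)) := by
    intro b
    unfold F
    rw [Multiset.card_map, Multiset.card_map]
    have hset : (Finset.univ.filter fun j =>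
          isChild 1 Nat.one_pos hm b Pbar x0 (n + 1) j = true)
        = (Finset.univ.filter fun j =>
          isChild 1 Nat.one_pos hm b P x0 (n + 1) j = true) := by
      ext j
      simp only [Finset.mem_filter, Finset.mem_univ, true_and]
      rw [hchild b n j j]
    rw [hset]
  exact MeasureTheory.integral_congr_ae (Filter.Eventually.of_forall fun ω => by
    simp only [hcard])
end

section
/- Under top-1 (single-genome) selection in Numeric Fitness World with n > 1 orders of meta-parameters, for every fixed noise realization b the number of children of the distinguished member after n+1 generations is the same for P and P̄: |F(P̄, b, n+1)| = |F(P, b, n+1)|. -/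
open Finset

lemma isChild_const {n m : ℕ} (hm : 0 < m) (b : ℕ → Fin m → Fin (n + 1) → ℝ)
    (Q : Fin m → Genome n) (x0 : Fin m) (c : Bool)
    (h1 : ∀ j, isChild 1 Nat.one_pos hm b Q x0 1 j = c) :
    ∀ t j, isChild 1 Nat.one_pos hm b Q x0 (t + 1) j = c := by
  intro t
  induction t with
  | zero => exact h1
  | succ t ih => intro j; exact ih _

/-- Under top-1 (single-genome) selection with `n > 1` orders of
meta-parameters, for every fixed noise realization `b` the number of children of the
distinguished member after `n + 1` generations is the same for `P` and `P̄`: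
`|F(P̄, b, n+1)| = |F(P, b, n+1)|`. -/
theorem top_one_children_count_eq
    {n m : ℕ} (hn : 1 < n) (hm : 0 < m)
    (b : ℕ → Fin m → Fin (n + 1) → ℝ)
    (P Pbar : Fin m → Genome n) (x0 : Fin m) (δ : ℝ) (hδ : 0 < δ)
    (hbar_last : Pbar x0 (Fin.last n) = P x0 (Fin.last n) + δ)
    (hbar_eq : ∀ i : Fin (n + 1), i ≠ Fin.last n → Pbar x0 i = P x0 i)
    (hbar_other : ∀ j : Fin m, j ≠ x0 → Pbar j = P j) :
    Multiset.card (F 1 Nat.one_pos hm b Pbar x0 (n + 1)) =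
      Multiset.card (F 1 Nat.one_pos hm b P x0 (n + 1)) := by
  have h0last : (0 : Fin (n + 1)) ≠ Fin.last n := by
    intro h
    have := congrArg Fin.val h
    simp [Fin.last] at this
    omega
  have hfit : ∀ j, fitness (Pbar j) = fitness (P j) := by
    intro j
    by_cases hj : j = x0
    · subst hj; exact hbar_eq 0 h0last
    · rw [hbar_other j hj]
  have hkey : key Pbar = key P := by
    funext j
    unfold key
    rw [hfit]
  have hrank : rankMember Pbar = rankMember P := by
    unfold rankMember
    rw [hkey]
  have hpar : ∀ (pop : Fin m → Genome n) (j : Fin m),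
      parentIdx 1 Nat.one_pos hm pop j = rankMember pop ⟨0, hm⟩ := by
    intro pop j
    unfold parentIdx
    congr 1
    exact Fin.ext (Nat.mod_one _)
  set s : Fin m := rankMember P ⟨0, hm⟩ with hs
  have h1P : ∀ j, isChild 1 Nat.one_pos hm b P x0 1 j = decide (s = x0) := by
    intro j
    show decide (parentIdx 1 Nat.one_pos hm (evolve 1 Nat.one_pos hm b P 0) j = x0) = _
    rw [show evolve 1 Nat.one_pos hm b P 0 = P from rfl, hpar]
  have h1Pbar : ∀ j, isChild 1 Nat.one_pos hm b Pbar x0 1 j = decide (s = x0) := by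
    intro j
    show decide (parentIdx 1 Nat.one_pos hm (evolve 1 Nat.one_pos hm b Pbar 0) j = x0) = _
    rw [show evolve 1 Nat.one_pos hm b Pbar 0 = Pbar from rfl, hpar, hrank]
  have hCP := isChild_const hm b P x0 (decide (s = x0)) h1P
  have hCPbar := isChild_const hm b Pbar x0 (decide (s = x0)) h1Pbar
  have hfilter :
      (Finset.univ.filter fun j => isChild 1 Nat.one_pos hm b Pbar x0 (n + 1) j = true) =
        (Finset.univ.filter fun j => isChild 1 Nat.one_pos hm b P x0 (n + 1) j = true) := by
    apply Finset.filter_congr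
    intro j _
    have h1 : n + 1 = n + 1 := rfl
    rw [hCPbar n j, hCP n j]
  unfold F
  rw [Multiset.card_map, Multiset.card_map, hfilter]
end

section
/- Under top-k selection in Numeric Fitness World with n orders of meta-parameters, for every fixed noise realization b the distinguished member x̄ of P̄ has at least as many children after n+1 generations as x has in P: |F(P̄, b, n+1)| ≥ |F(P, b, n+1)|. -/
open Finset

lemma sort_symm_card {α : Type*} [LinearOrder α] {m : ℕ} (f : Fin m → α)
    (hf : Function.Injective f) (j : Fin m) :
    (((Tuple.sort f).symm j : Fin m) : ℕ)
      = (univ.filter fun j' => f j' < f j).card := by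
  set σ := Tuple.sort f with hσ
  have hg : StrictMono (f ∘ σ) :=
    (Tuple.monotone_sort f).strictMono_of_injective (hf.comp σ.injective)
  have hj : j = σ (σ.symm j) := (σ.apply_symm_apply j).symm
  set r := σ.symm j with hr
  rw [show j = σ r from hj]
  have h1 : (univ.filter fun j' => f j' < f (σ r))
      = (univ.filter fun s => f (σ s) < f (σ r)).image σ := by
    ext j'
    simp only [mem_filter, mem_image, mem_univ, true_and]
    constructor
    · intro h; exact ⟨σ.symm j', by simpa using h, σ.apply_symm_apply j'⟩
    · rintro ⟨s, hs, rfl⟩; exact hs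
  rw [h1, card_image_of_injective _ σ.injective]
  have h2 : (univ.filter fun s => f (σ s) < f (σ r)) = Finset.Iio r := by
    ext s
    simp only [mem_filter, mem_univ, true_and, Finset.mem_Iio]
    exact hg.lt_iff_lt
  rw [h2, Fin.card_Iio]

/-- counting lemma: number of slots `j < m` with `p (j % k)` equals `(m/k) *` count of
ranks `r < k` with `p r`. -/
lemma count_mod {m k : ℕ} (hk : 0 < k) (hkm : k ≤ m) (hdvd : k ∣ m)
    (p : ℕ → Prop) [DecidablePred p] :
    (univ.filter fun j : Fin m => p ((j : ℕ) % k)).card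
      = (m / k) * (univ.filter fun r : Fin m => (r : ℕ) < k ∧ p (r : ℕ)).card := by
  have step1 : (univ.filter fun j : Fin m => p ((j : ℕ) % k)).card
      = ((range m).filter fun a => p (a % k)).card := by
    refine Finset.card_bij (fun j _ => (j : ℕ)) ?_ ?_ ?_
    · intro j hj; simp only [mem_filter, mem_range]
      exact ⟨j.isLt, by simpa using (mem_filter.mp hj).2⟩
    · intro a ha b hb h; exact Fin.ext h
    · intro a ha
      simp only [mem_filter, mem_range] at ha
      exact ⟨⟨a, ha.1⟩, by simp [ha.2], rfl⟩
  have step3 : (univ.filter fun r : Fin m => (r : ℕ) < k ∧ p (r : ℕ)).card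
      = ((range k).filter p).card := by
    refine Finset.card_bij (fun r _ => (r : ℕ)) ?_ ?_ ?_
    · intro r hr; simp only [mem_filter, mem_range]
      simp only [mem_filter, mem_univ, true_and] at hr
      exact ⟨hr.1, hr.2⟩
    · intro a ha b hb h; exact Fin.ext h
    · intro a ha
      simp only [mem_filter, mem_range] at ha
      exact ⟨⟨a, lt_of_lt_of_le ha.1 hkm⟩, by simp [ha.1, ha.2], rfl⟩
  have step2 : ((range m).filter fun a => p (a % k)).card
      = (m / k) * ((range k).filter p).card := by
    rw [← Finset.card_range (m / k), ← Finset.card_product]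
    refine (Finset.card_bij (fun (x : ℕ × ℕ) _ => x.1 * k + x.2) ?_ ?_ ?_).symm
    · rintro ⟨q, r⟩ hx
      simp only [Finset.mem_product, mem_filter, mem_range] at hx
      obtain ⟨hq, hr, hp⟩ := hx
      simp only [mem_filter, mem_range]
      constructor
      · have h1 : q * k + r < (q + 1) * k := by nlinarith
        have h2 : (q + 1) * k ≤ (m / k) * k := Nat.mul_le_mul_right _ (by omega)
        have h3 : (m / k) * k = m := Nat.div_mul_cancel hdvd
        omega
      · rwa [Nat.mul_comm, Nat.mul_add_mod, Nat.mod_eq_of_lt hr]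
    · rintro ⟨q1, r1⟩ h1 ⟨q2, r2⟩ h2 h
      simp only [Finset.mem_product, mem_filter, mem_range] at h1 h2
      dsimp only at h
      have e1 : (q1 * k + r1) % k = r1 := by rw [Nat.mul_comm, Nat.mul_add_mod, Nat.mod_eq_of_lt h1.2.1]
      have e2 : (q2 * k + r2) % k = r2 := by rw [Nat.mul_comm, Nat.mul_add_mod, Nat.mod_eq_of_lt h2.2.1]
      have hr : r1 = r2 := by rw [← e1, ← e2, h]
      subst hr
      have hq : q1 = q2 := by
        have hk' : q1 * k = q2 * k := by omega
        exact Nat.eq_of_mul_eq_mul_right hk hk'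
      simp [hq]
    · intro a ha
      simp only [mem_filter, mem_range] at ha
      refine ⟨(a / k, a % k), ?_, ?_⟩
      · simp only [Finset.mem_product, mem_filter, mem_range]
        exact ⟨Nat.div_lt_div_of_lt_of_dvd hdvd ha.1, Nat.mod_lt _ hk, ha.2⟩
      · dsimp only
        rw [Nat.mul_comm, Nat.div_add_mod]
  rw [step1, step2, step3]
lemma parallel {n m : ℕ} (k : ℕ) (hk : 0 < k) (hkm : k ≤ m)
    (b : ℕ → Fin m → Fin (n + 1) → ℝ)
    (P Pbar : Fin m → Genome n) (x0 : Fin m) (δ : ℝ)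
    (hbar_last : Pbar x0 (Fin.last n) = P x0 (Fin.last n) + δ)
    (hbar_eq : ∀ i : Fin (n + 1), i ≠ Fin.last n → Pbar x0 i = P x0 i)
    (hbar_other : ∀ j : Fin m, j ≠ x0 → Pbar j = P j) :
    ∀ t, t ≤ n →
      (∀ j, isChild k hk hkm b Pbar x0 t j = isChild k hk hkm b P x0 t j) ∧
      (∀ j i, evolve k hk hkm b Pbar t j i =
        evolve k hk hkm b P t j i +
          (if isChild k hk hkm b P x0 t j = true
            then δ * ((t.choose (n - (i : ℕ))) : ℝ) else 0)) := by
  intro t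
  induction t with
  | zero =>
    intro _
    refine ⟨fun j => rfl, fun j i => ?_⟩
    show Pbar j i = P j i + _
    have hch : isChild k hk hkm b P x0 0 j = decide (j = x0) := rfl
    rw [hch]
    by_cases hj : j = x0
    · subst hj
      rw [if_pos (by simp)]
      by_cases hi : i = Fin.last n
      · subst hi
        simp only [Fin.val_last, Nat.sub_self, Nat.choose_self, Nat.cast_one, mul_one]
        exact hbar_last
      · have hne : (i : ℕ) ≠ n := fun h => hi (Fin.ext (by simp [h]))
        have hlt : (i : ℕ) < n := by have := i.isLt; omega
        rw [Nat.choose_eq_zero_of_lt (by omega), Nat.cast_zero, mul_zero, add_zero]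
        exact hbar_eq i hi
    · rw [if_neg (by simp [hj]), add_zero, hbar_other j hj]
  | succ t IH =>
    intro ht
    have ht' : t ≤ n := Nat.le_of_succ_le ht
    obtain ⟨IH1, IH2⟩ := IH ht'
    have hfit : ∀ j, fitness (evolve k hk hkm b Pbar t j)
        = fitness (evolve k hk hkm b P t j) := by
      intro j
      have h0 := IH2 j 0
      have hz : (0 : Fin (n+1)).val = 0 := rfl
      rw [hz, Nat.sub_zero, Nat.choose_eq_zero_of_lt (by omega), Nat.cast_zero,
        mul_zero] at h0
      simpa [fitness] using h0
    have hkey : key (evolve k hk hkm b Pbar t) = key (evolve k hk hkm b P t) := by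
      funext j; unfold key; rw [hfit]
    have hpar : parentIdx k hk hkm (evolve k hk hkm b Pbar t)
        = parentIdx k hk hkm (evolve k hk hkm b P t) := by
      funext j; unfold parentIdx rankMember; rw [hkey]
    have hchild : ∀ j, isChild k hk hkm b Pbar x0 (t+1) j = isChild k hk hkm b P x0 (t+1) j := by
      intro j
      show isChild k hk hkm b Pbar x0 t (parentIdx k hk hkm (evolve k hk hkm b Pbar t) j)
        = isChild k hk hkm b P x0 t (parentIdx k hk hkm (evolve k hk hkm b P t) j)
      rw [hpar]; exact IH1 _
    refine ⟨hchild, fun j i => ?_⟩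
    show mutate (evolve k hk hkm b Pbar t (parentIdx k hk hkm (evolve k hk hkm b Pbar t) j)) (b t j) i
      = mutate (evolve k hk hkm b P t (parentIdx k hk hkm (evolve k hk hkm b P t) j)) (b t j) i + _
    rw [hpar]
    set p := parentIdx k hk hkm (evolve k hk hkm b P t) j with hp
    have hcc : isChild k hk hkm b P x0 (t+1) j = isChild k hk hkm b P x0 t p := rfl
    rw [hcc]
    unfold mutate
    by_cases hi : (i : ℕ) < n
    · rw [dif_pos hi, dif_pos hi]
      rw [IH2 p i, IH2 p ⟨(i : ℕ) + 1, by omega⟩]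
      cases hc : isChild k hk hkm b P x0 t p
      · simp
      · simp only [if_pos rfl]
        have hs : n - (i : ℕ) = (n - ((i : ℕ) + 1)) + 1 := by omega
        rw [hs, Nat.choose_succ_succ]
        push_cast
        ring
    · rw [dif_neg hi, dif_neg hi, IH2 p i]
      have hs : n - (i : ℕ) = 0 := by have := i.isLt; omega
      rw [hs]
      cases hc : isChild k hk hkm b P x0 t p <;> simp
      ring

lemma key_injective {n m : ℕ} (pop : Fin m → Genome n) : Function.Injective (key pop) := by
  intro a b h
  have := congrArg (fun x => (ofLex x).2) h
  exact Fin.ext this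


/-- Under top-`k` selection with `n` orders of meta-parameters, for every
fixed noise realization `b` the distinguished member `x̄` of `P̄` has at least as many
children after `n + 1` generations as `x` has in `P`:
`|F(P̄, b, n+1)| ≥ |F(P, b, n+1)|`. -/
theorem topk_children_count_ge
    {n m : ℕ} (k : ℕ) (hk : 0 < k) (hkm : k ≤ m) (hdvd : k ∣ m)
    (b : ℕ → Fin m → Fin (n + 1) → ℝ)
    (P Pbar : Fin m → Genome n) (x0 : Fin m) (δ : ℝ) (hδ : 0 < δ)
    (hbar_last : Pbar x0 (Fin.last n) = P x0 (Fin.last n) + δ)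
    (hbar_eq : ∀ i : Fin (n + 1), i ≠ Fin.last n → Pbar x0 i = P x0 i)
    (hbar_other : ∀ j : Fin m, j ≠ x0 → Pbar j = P j) :
    Multiset.card (F k hk hkm b P x0 (n + 1)) ≤
      Multiset.card (F k hk hkm b Pbar x0 (n + 1)) := by
  obtain ⟨hch_eq, hdiff⟩ :=
    parallel k hk hkm b P Pbar x0 δ hbar_last hbar_eq hbar_other n le_rfl
  set popP := evolve k hk hkm b P n with hpopP
  set popB := evolve k hk hkm b Pbar n with hpopB
  set child : Fin m → Bool := isChild k hk hkm b P x0 n with hchilddef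
  -- fitness relation at generation n
  have hfit : ∀ j, fitness (popB j)
      = fitness (popP j) + (if child j = true then δ else 0) := by
    intro j
    have h0 := hdiff j 0
    have hz : ((0 : Fin (n+1)) : ℕ) = 0 := rfl
    rw [hz, Nat.sub_zero, Nat.choose_self, Nat.cast_one, mul_one] at h0
    simpa [fitness] using h0
  set σP := Tuple.sort (key popP) with hσP
  set σB := Tuple.sort (key popB) with hσB
  -- children's ranks weakly improve
  have hrank : ∀ j : Fin m, child j = true →
      ((σB.symm j : Fin m) : ℕ) ≤ ((σP.symm j : Fin m) : ℕ) := by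
    intro j hj
    rw [hσB, hσP, sort_symm_card _ (key_injective popB),
      sort_symm_card _ (key_injective popP)]
    apply Finset.card_le_card
    intro j' hj'
    simp only [mem_filter, mem_univ, true_and] at hj' ⊢
    unfold key at hj' ⊢
    rw [Prod.Lex.lt_iff] at hj' ⊢
    rw [hfit j, hfit j', hj, if_pos rfl] at hj'
    by_cases hc' : child j' = true
    · rw [if_pos hc'] at hj'
      rcases hj' with h | ⟨h1, h2⟩
      · exact Or.inl (by dsimp at h ⊢; linarith)
      · exact Or.inr ⟨by dsimp at h1 ⊢; linarith, h2⟩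
    · rw [if_neg hc'] at hj'
      rcases hj' with h | ⟨h1, h2⟩
      · exact Or.inl (by dsimp at h ⊢; linarith)
      · exact Or.inl (by dsimp at h1 ⊢; linarith)
  -- the two selection-count predicates
  have hmod : ∀ a : ℕ, a % k < m := fun a => lt_of_lt_of_le (Nat.mod_lt _ hk) hkm
  set pP : ℕ → Prop := fun a =>
    isChild k hk hkm b P x0 n (rankMember popP ⟨a % k, hmod a⟩) = true with hpP
  set pB : ℕ → Prop := fun a =>
    isChild k hk hkm b Pbar x0 n (rankMember popB ⟨a % k, hmod a⟩) = true with hpB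
  -- comparing the number of selected children-ranks
  have hmk : ∀ r : Fin m, (r : ℕ) < k → (⟨(r : ℕ) % k, hmod r⟩ : Fin m) = r :=
    fun r hr => Fin.ext (Nat.mod_eq_of_lt hr)
  have hcnt : (univ.filter fun r : Fin m => (r : ℕ) < k ∧ pP (r : ℕ)).card
      ≤ (univ.filter fun r : Fin m => (r : ℕ) < k ∧ pB (r : ℕ)).card := by
    apply Finset.card_le_card_of_injOn (fun r => σB.symm (σP r))
    · intro r hr
      simp only [Finset.mem_coe, mem_filter, mem_univ, true_and] at hr
      obtain ⟨hrk, hrp⟩ := hr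
      rw [hpP] at hrp
      simp only [hmk r hrk] at hrp
      have hrmP : rankMember popP r = σP r := rfl
      rw [hrmP] at hrp
      have hle : ((σB.symm (σP r) : Fin m) : ℕ) ≤ ((σP.symm (σP r) : Fin m) : ℕ) :=
        hrank (σP r) hrp
      rw [Equiv.symm_apply_apply] at hle
      have hlt : ((σB.symm (σP r) : Fin m) : ℕ) < k := lt_of_le_of_lt hle hrk
      simp only [Finset.mem_coe, mem_filter, mem_univ, true_and]
      refine ⟨hlt, ?_⟩
      rw [hpB]
      simp only [hmk _ hlt]
      have hrmB : rankMember popB (σB.symm (σP r)) = σB (σB.symm (σP r)) := rfl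
      rw [hrmB, Equiv.apply_symm_apply]
      rw [hch_eq (σP r)]
      exact hrp
    · intro a _ b' _ h
      exact σP.injective (σB.symm.injective h)
  -- counting children at generation n+1
  have hcardP : Multiset.card (F k hk hkm b P x0 (n + 1))
      = (univ.filter fun j : Fin m => pP (j : ℕ)).card := by
    rw [F, Multiset.card_map]
    rfl
  have hcardB : Multiset.card (F k hk hkm b Pbar x0 (n + 1))
      = (univ.filter fun j : Fin m => pB (j : ℕ)).card := by
    rw [F, Multiset.card_map]
    rfl
  have hmmP : ∀ a : ℕ, pP (a % k) = pP a := by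
    intro a
    rw [hpP]
    show (isChild k hk hkm b P x0 n (rankMember popP ⟨a % k % k, hmod (a % k)⟩) = true)
       = (isChild k hk hkm b P x0 n (rankMember popP ⟨a % k, hmod a⟩) = true)
    have e : (⟨a % k % k, hmod (a % k)⟩ : Fin m) = ⟨a % k, hmod a⟩ :=
      Fin.ext (Nat.mod_mod_of_dvd _ dvd_rfl)
    rw [e]
  have hmmB : ∀ a : ℕ, pB (a % k) = pB a := by
    intro a
    rw [hpB]
    show (isChild k hk hkm b Pbar x0 n (rankMember popB ⟨a % k % k, hmod (a % k)⟩) = true)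
       = (isChild k hk hkm b Pbar x0 n (rankMember popB ⟨a % k, hmod a⟩) = true)
    have e : (⟨a % k % k, hmod (a % k)⟩ : Fin m) = ⟨a % k, hmod a⟩ :=
      Fin.ext (Nat.mod_mod_of_dvd _ dvd_rfl)
    rw [e]
  have hfP : (univ.filter fun j : Fin m => pP (j : ℕ))
      = univ.filter fun j : Fin m => pP ((j : ℕ) % k) :=
    filter_congr fun j _ => iff_of_eq (hmmP (j : ℕ)).symm
  have hfB : (univ.filter fun j : Fin m => pB (j : ℕ))
      = univ.filter fun j : Fin m => pB ((j : ℕ) % k) :=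
    filter_congr fun j _ => iff_of_eq (hmmB (j : ℕ)).symm
  rw [hcardP, hcardB, hfP, hfB, count_mod hk hkm hdvd pP, count_mod hk hkm hdvd pB]
  exact Nat.mul_le_mul_left _ hcnt
end

section
/- In Numeric Fitness World with n orders of meta-parameters under top-k selection, for every fixed noise realization b and every generation t < n, the multiset of fitnesses of the children of the distinguished member, and the multiset of fitnesses of the non-children, are identical in the two populations: F(P̄, b, t) = F(P, b, t) and F⁻¹(P̄, b, t) = F⁻¹(P, b, t), and the same members are selected at each of these generations in both populations. -/
open Finset

/-- Under top-`k` selection with `n` orders of meta-parameters, for every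
fixed noise realization `b` and every generation `t < n`, the multiset of fitnesses of the
children of the distinguished member and the multiset of fitnesses of the non-children are
identical in the two populations, and the same members are selected at each of these
generations in both populations. -/
theorem topk_early_generations_identical
    {n m : ℕ} (k : ℕ) (hk : 0 < k) (hkm : k ≤ m) (hdvd : k ∣ m)
    (b : ℕ → Fin m → Fin (n + 1) → ℝ)
    (P Pbar : Fin m → Genome n) (x0 : Fin m) (δ : ℝ) (hδ : 0 < δ)
    (hbar_last : Pbar x0 (Fin.last n) = P x0 (Fin.last n) + δ)
    (hbar_eq : ∀ i : Fin (n + 1), i ≠ Fin.last n → Pbar x0 i = P x0 i)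
    (hbar_other : ∀ j : Fin m, j ≠ x0 → Pbar j = P j) :
    ∀ t : ℕ, t < n →
      F k hk hkm b Pbar x0 t = F k hk hkm b P x0 t ∧
      Finv k hk hkm b Pbar x0 t = Finv k hk hkm b P x0 t ∧
      selectedSet k (evolve k hk hkm b Pbar t) = selectedSet k (evolve k hk hkm b P t) := by
  have main : ∀ t, t ≤ n →
      (∀ j (i : Fin (n+1)), (i:ℕ) + t < n →
        evolve k hk hkm b Pbar t j i = evolve k hk hkm b P t j i) ∧
      isChild k hk hkm b Pbar x0 t = isChild k hk hkm b P x0 t := by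
    intro t
    induction t with
    | zero =>
      intro _
      constructor
      · intro j i hi
        simp only [evolve]
        by_cases hj : j = x0
        · subst hj
          apply hbar_eq
          intro hcon
          rw [hcon] at hi
          simp [Fin.last] at hi
        · rw [hbar_other j hj]
      · rfl
    | succ t ih =>
      intro ht
      have ht' : t < n := lt_of_lt_of_le (Nat.lt_succ_self t) ht
      obtain ⟨ihe, ihc⟩ := ih (le_of_lt ht')
      have hkey : key (evolve k hk hkm b Pbar t) = key (evolve k hk hkm b P t) := by
        funext j
        unfold key fitness
        rw [ihe j 0 (by simpa using ht')]
      have hpar : parentIdx k hk hkm (evolve k hk hkm b Pbar t)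
          = parentIdx k hk hkm (evolve k hk hkm b P t) := by
        unfold parentIdx rankMember
        rw [hkey]
      constructor
      · intro j i hi
        have hin : (i:ℕ) < n := by omega
        simp only [evolve, mutate, hpar, dif_pos hin]
        rw [ihe _ i (by omega), ihe _ ⟨(i:ℕ)+1, by omega⟩ (by simp; omega)]
      · funext j
        simp only [isChild, hpar, ihc]
  intro t ht
  obtain ⟨he, hc⟩ := main t (le_of_lt ht)
  have hfit : (fun j => fitness (evolve k hk hkm b Pbar t j))
      = fun j => fitness (evolve k hk hkm b P t j) := by
    funext j
    unfold fitness
    exact he j 0 (by simpa using ht)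
  refine ⟨?_, ?_, ?_⟩
  · unfold F; rw [hc, hfit]
  · unfold Finv; rw [hc, hfit]
  · have hkey : key (evolve k hk hkm b Pbar t) = key (evolve k hk hkm b P t) := by
      funext j
      unfold key fitness
      rw [he j 0 (by simpa using ht)]
    unfold selectedSet rankMember
    rw [hkey]
end

section
/- In Numeric Fitness World with n orders of meta-parameters under top-k selection, for every fixed noise realization b, at generation n the fitness of each child of the distinguished member in P̄ exceeds the fitness of the corresponding child in P by exactly δ, i.e. F(P̄, b, n) = F(P, b, n) ⊕ δ, where ⊕ denotes adding δ to every element of the multiset. -/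
open Finset

/-- Under top-`k` selection with `n` orders of meta-parameters, for every
fixed noise realization `b`, at generation `n` the fitness of each child of the
distinguished member in `P̄` exceeds the fitness of the corresponding child in `P` by
exactly `δ`: `F(P̄, b, n) = F(P, b, n) ⊕ δ`, where `⊕` adds `δ` to every element of the
multiset. -/
theorem topk_children_fitness_shifted_at_n
    {n m : ℕ} (k : ℕ) (hk : 0 < k) (hkm : k ≤ m) (hdvd : k ∣ m)
    (b : ℕ → Fin m → Fin (n + 1) → ℝ)
    (P Pbar : Fin m → Genome n) (x0 : Fin m) (δ : ℝ) (hδ : 0 < δ)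
    (hbar_last : Pbar x0 (Fin.last n) = P x0 (Fin.last n) + δ)
    (hbar_eq : ∀ i : Fin (n + 1), i ≠ Fin.last n → Pbar x0 i = P x0 i)
    (hbar_other : ∀ j : Fin m, j ≠ x0 → Pbar j = P j) :
    F k hk hkm b Pbar x0 n = Multiset.map (fun v => v + δ) (F k hk hkm b P x0 n) := by
  have main : ∀ t, t ≤ n →
      (∀ j i, evolve k hk hkm b Pbar t j i
         = evolve k hk hkm b P t j i
           + (if isChild k hk hkm b P x0 t j = true then δ * (t.choose (n - (i : ℕ))) else 0)) ∧
      isChild k hk hkm b Pbar x0 t = isChild k hk hkm b P x0 t := by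
    intro t
    induction t with
    | zero =>
      intro _
      refine ⟨?_, rfl⟩
      intro j i
      show Pbar j i = P j i + _
      by_cases hj : j = x0
      · rw [hj]
        have hchild : isChild k hk hkm b P x0 0 x0 = true := by simp [isChild]
        rw [hchild, if_pos rfl]
        by_cases hi : i = Fin.last n
        · rw [hi]
          have h1 : n - ((Fin.last n : Fin (n + 1)) : ℕ) = 0 := by simp
          rw [h1, hbar_last]
          norm_num
        · have h4 : n - (i : ℕ) = (n - (i : ℕ) - 1) + 1 := by
            have h2 := i.isLt
            have h3 : (i : ℕ) ≠ n := fun h => hi (Fin.ext (by simpa using h))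
            omega
          rw [hbar_eq i hi, h4]
          simp [Nat.choose]
      · rw [hbar_other j hj]
        have hchild : isChild k hk hkm b P x0 0 j = false := by simp [isChild, hj]
        simp [hchild]
    | succ t ih =>
      intro ht
      have ht' : t < n := by omega
      obtain ⟨hev, hch⟩ := ih (le_of_lt ht')
      have hfit : ∀ j, fitness (evolve k hk hkm b Pbar t j)
          = fitness (evolve k hk hkm b P t j) := by
        intro j
        have h := hev j 0
        have h0 : n - ((0 : Fin (n + 1)) : ℕ) = n := by simp
        rw [fitness, fitness, h, h0, Nat.choose_eq_zero_of_lt ht']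
        simp
      have hkey : key (evolve k hk hkm b Pbar t) = key (evolve k hk hkm b P t) := by
        funext j; unfold key; rw [hfit j]
      have hpar : parentIdx k hk hkm (evolve k hk hkm b Pbar t)
          = parentIdx k hk hkm (evolve k hk hkm b P t) := by
        funext j
        unfold parentIdx rankMember
        rw [hkey]
      have hch' : isChild k hk hkm b Pbar x0 (t + 1) = isChild k hk hkm b P x0 (t + 1) := by
        funext j
        show isChild k hk hkm b Pbar x0 t (parentIdx k hk hkm (evolve k hk hkm b Pbar t) j)
            = isChild k hk hkm b P x0 t (parentIdx k hk hkm (evolve k hk hkm b P t) j)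
        rw [hpar, hch]
      refine ⟨?_, hch'⟩
      intro j i
      set p := parentIdx k hk hkm (evolve k hk hkm b P t) j with hp
      have hchild : isChild k hk hkm b P x0 (t + 1) j = isChild k hk hkm b P x0 t p := rfl
      show mutate (evolve k hk hkm b Pbar t
          (parentIdx k hk hkm (evolve k hk hkm b Pbar t) j)) (b t j) i = _
      rw [hpar, ← hp]
      show mutate (evolve k hk hkm b Pbar t p) (b t j) i
          = mutate (evolve k hk hkm b P t p) (b t j) i + _
      rw [hchild]
      by_cases hi : (i : ℕ) < n
      · simp only [mutate]
        rw [dif_pos hi, dif_pos hi]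
        rw [hev p i, hev p ⟨(i : ℕ) + 1, by omega⟩]
        by_cases hc : isChild k hk hkm b P x0 t p = true
        · rw [if_pos hc, if_pos hc, if_pos hc]
          simp only [Fin.val_mk]
          obtain ⟨s, hs⟩ : ∃ s, n - (i : ℕ) = s + 1 := ⟨n - (i : ℕ) - 1, by omega⟩
          have hs2 : n - ((i : ℕ) + 1) = s := by omega
          rw [hs2, hs, Nat.choose_succ_succ]
          push_cast
          ring
        · rw [if_neg hc, if_neg hc, if_neg hc]
          ring
      · simp only [mutate]
        rw [dif_neg hi, dif_neg hi]
        rw [hev p i]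
        have h0 : n - (i : ℕ) = 0 := by omega
        rw [h0]
        by_cases hc : isChild k hk hkm b P x0 t p = true
        · rw [if_pos hc, if_pos hc, Nat.choose_zero_right, Nat.choose_zero_right]
          push_cast
          ring
        · rw [if_neg hc, if_neg hc]
          ring
  obtain ⟨hev, hch⟩ := main n le_rfl
  unfold F
  rw [hch, Multiset.map_map]
  apply Multiset.map_congr rfl
  intro j hj
  simp only [Finset.mem_val, Finset.mem_filter] at hj
  have h := hev j 0
  have h0 : n - ((0 : Fin (n + 1)) : ℕ) = n := by simp
  rw [h0, hj.2, if_pos rfl, Nat.choose_self] at h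
  show fitness (evolve k hk hkm b Pbar n j) = fitness (evolve k hk hkm b P n j) + δ
  rw [fitness, fitness, h]
  norm_num
end

section
/- In Numeric Fitness World with n orders of meta-parameters under top-k selection, for every fixed noise realization b, the multiset of fitnesses of the non-children of the distinguished member at generation n is identical in the two populations: F⁻¹(P̄, b, n) = F⁻¹(P, b, n); that is, the perturbation of x's n-th meta-parameter cannot influence the fitness of any non-child of x before generation n+1. -/
open Finset

lemma parentIdx_congr {n m : ℕ} (k : ℕ) (hk : 0 < k) (hkm : k ≤ m)
    {p q : Fin m → Genome n} (h : ∀ j, fitness (p j) = fitness (q j)) :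
    parentIdx k hk hkm p = parentIdx k hk hkm q := by
  have hkey : key p = key q := by
    funext j; unfold key; rw [h]
  unfold parentIdx rankMember
  rw [hkey]

lemma main_inv {n m : ℕ} (k : ℕ) (hk : 0 < k) (hkm : k ≤ m)
    (b : ℕ → Fin m → Fin (n + 1) → ℝ)
    (P Pbar : Fin m → Genome n) (x0 : Fin m)
    (hbar_eq : ∀ i : Fin (n + 1), i ≠ Fin.last n → Pbar x0 i = P x0 i)
    (hbar_other : ∀ j : Fin m, j ≠ x0 → Pbar j = P j) :
    ∀ t, t ≤ n →
      (∀ j, isChild k hk hkm b Pbar x0 t j = isChild k hk hkm b P x0 t j) ∧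
      (∀ j, isChild k hk hkm b P x0 t j = false →
          evolve k hk hkm b Pbar t j = evolve k hk hkm b P t j) ∧
      (∀ j, isChild k hk hkm b P x0 t j = true →
          ∀ i : Fin (n+1), (i : ℕ) < n - t →
            evolve k hk hkm b Pbar t j i = evolve k hk hkm b P t j i) := by
  intro t
  induction t with
  | zero =>
    intro _
    refine ⟨fun j => rfl, fun j hj => ?_, fun j hj i hi => ?_⟩
    · simp only [isChild, decide_eq_false_iff_not] at hj
      exact hbar_other j hj
    · simp only [isChild, decide_eq_true_eq] at hj
      subst hj
      simp only [evolve]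
      exact hbar_eq i (by
        intro hcon
        rw [hcon] at hi
        simp [Fin.last] at hi)
  | succ t ih =>
    intro hle
    have htn : t < n := by omega
    obtain ⟨ha, hb, hc⟩ := ih (by omega)
    have hfit : ∀ j, fitness (evolve k hk hkm b Pbar t j)
        = fitness (evolve k hk hkm b P t j) := by
      intro j
      cases hch : isChild k hk hkm b P x0 t j with
      | false => rw [hb j hch]
      | true =>
        have := hc j hch 0 (by simp; omega)
        simpa [fitness] using this
    have hpar : parentIdx k hk hkm (evolve k hk hkm b Pbar t)
        = parentIdx k hk hkm (evolve k hk hkm b P t) :=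
      parentIdx_congr k hk hkm hfit
    refine ⟨fun j => ?_, fun j hj => ?_, fun j hj i hi => ?_⟩
    · simp only [isChild, hpar, ha]
    · simp only [isChild, hpar] at hj
      simp only [evolve, hpar, hb _ hj]
    · simp only [isChild, hpar] at hj
      simp only [evolve, hpar, mutate]
      have hin : (i : ℕ) < n := by omega
      rw [dif_pos hin, dif_pos hin]
      rw [hc _ hj i (by omega), hc _ hj ⟨(i : ℕ) + 1, by omega⟩ (by simp; omega)]

/-- Under top-`k` selection with `n` orders of meta-parameters, for every
fixed noise realization `b`, the multiset of fitnesses of the non-children of the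
distinguished member at generation `n` is identical in the two populations:
`F⁻¹(P̄, b, n) = F⁻¹(P, b, n)`. -/
theorem topk_nonchildren_fitness_eq_at_n
    {n m : ℕ} (k : ℕ) (hk : 0 < k) (hkm : k ≤ m) (hdvd : k ∣ m)
    (b : ℕ → Fin m → Fin (n + 1) → ℝ)
    (P Pbar : Fin m → Genome n) (x0 : Fin m) (δ : ℝ) (hδ : 0 < δ)
    (hbar_last : Pbar x0 (Fin.last n) = P x0 (Fin.last n) + δ)
    (hbar_eq : ∀ i : Fin (n + 1), i ≠ Fin.last n → Pbar x0 i = P x0 i)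
    (hbar_other : ∀ j : Fin m, j ≠ x0 → Pbar j = P j) :
    Finv k hk hkm b Pbar x0 n = Finv k hk hkm b P x0 n := by
  obtain ⟨ha, hb2, _⟩ := main_inv k hk hkm b P Pbar x0 hbar_eq hbar_other n le_rfl
  unfold Finv
  have hset : (Finset.univ.filter fun j => isChild k hk hkm b Pbar x0 n j = false)
      = (Finset.univ.filter fun j => isChild k hk hkm b P x0 n j = false) := by
    apply Finset.filter_congr
    intro j _
    rw [ha j]
  rw [hset]
  apply Multiset.map_congr rfl
  intro j hj
  rw [Finset.mem_val, Finset.mem_filter] at hj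
  rw [hb2 j hj.2]
end
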